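/- arXiv:1002.4318 — 2 statements merged into one kernel-verified Lean document; each statement's English description precedes it below -/
import Mathlib

section
/- The field of P-invariant rational functions satisfies F(a0, a1, a2)^P = F(a0, β, Δ), where the action of P extends to the field of fractions of F[V]. -/
/-!
Every generator of `L = F(a0, β, Δ)` is `P`-invariant, so `L` lies in the fixed field. Conversely,
`a2 = (a1² - Δ) / a0`, so `F(a0, a1, a2) = L(a1)`; and homogenising `∏_{c ∈ F_q} (T - c) = T^q - T`
gives `β = a1^q - a0^(q-1) a1`, so `[F(a0, a1, a2) : L] ≤ q`. By Artin's theorem the fixed field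
has codimension `|P| = q`, which leaves no room between `L` and the fixed field.
-/

open MvPolynomial
open scoped Classical

/-- The algebra automorphism of `F[a0,a1,a2]` induced by the upper-triangular matrix `σ_c`:
`a0 ↦ a0`, `a1 ↦ a1 + c·a0`, `a2 ↦ a2 + 2c·a1 + c²·a0`.  Here `a_i = X i`. -/
noncomputable def σP (F : Type*) [Field F] (c : F) :
    MvPolynomial (Fin 3) F →ₐ[F] MvPolynomial (Fin 3) F :=
  aeval ![X 0, X 1 + C c * X 0, X 2 + C (2 * c) * X 1 + C (c ^ 2) * X 0]

/-- The algebra automorphism of `F[a0,a1,a2]` induced by `τ`: `a0 ↦ a2`, `a1 ↦ -a1`, `a2 ↦ a0`. -/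
noncomputable def τA (F : Type*) [Field F] :
    MvPolynomial (Fin 3) F →ₐ[F] MvPolynomial (Fin 3) F :=
  aeval ![X 2, -X 1, X 0]

set_option linter.unnecessarySeqFocus false in
/-- `σ_c` as an algebra equivalence (its inverse is `σ_{-c}`). -/
noncomputable def σE (F : Type*) [Field F] (c : F) :
    MvPolynomial (Fin 3) F ≃ₐ[F] MvPolynomial (Fin 3) F :=
  AlgEquiv.ofAlgHom (σP F c) (σP F (-c))
    (by apply MvPolynomial.algHom_ext; intro i; fin_cases i <;>
        simp [σP, mul_neg, neg_mul, map_ofNat] <;> ring)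
    (by apply MvPolynomial.algHom_ext; intro i; fin_cases i <;>
        simp [σP, mul_neg, neg_mul, map_ofNat] <;> ring)

/-- `τ` as an algebra equivalence (it is an involution). -/
noncomputable def τE (F : Type*) [Field F] :
    MvPolynomial (Fin 3) F ≃ₐ[F] MvPolynomial (Fin 3) F :=
  AlgEquiv.ofAlgHom (τA F) (τA F)
    (by apply MvPolynomial.algHom_ext; intro i; fin_cases i <;> simp [τA])
    (by apply MvPolynomial.algHom_ext; intro i; fin_cases i <;> simp [τA])

/-- The extension of `σ_c` to the field of fractions `F(a0,a1,a2)`. -/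
noncomputable def σK (F : Type*) [Field F] (c : F) :
    FractionRing (MvPolynomial (Fin 3) F) ≃+* FractionRing (MvPolynomial (Fin 3) F) :=
  IsFractionRing.ringEquivOfRingEquiv (σE F c).toRingEquiv

/-- The extension of `τ` to the field of fractions `F(a0,a1,a2)`. -/
noncomputable def τK (F : Type*) [Field F] :
    FractionRing (MvPolynomial (Fin 3) F) ≃+* FractionRing (MvPolynomial (Fin 3) F) :=
  IsFractionRing.ringEquivOfRingEquiv (τE F).toRingEquiv

namespace FiniteField

variable {Fq : Type*} [Field Fq] [Fintype Fq]

theorem prod_X_sub_C_eq_X_pow_card_sub_X :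
    ∏ c : Fq, (Polynomial.X - Polynomial.C c) = Polynomial.X ^ Fintype.card Fq - Polynomial.X := by
  have hmonic : (Polynomial.X ^ Fintype.card Fq - Polynomial.X : Polynomial Fq).Monic :=
    Polynomial.monic_X_pow_sub
      (Polynomial.degree_X_le.trans_lt (by exact_mod_cast Fintype.one_lt_card))
  have h := Polynomial.prod_multiset_X_sub_C_of_monic_of_roots_card_eq hmonic (by
    rw [roots_X_pow_card_sub_X, X_pow_card_sub_X_natDegree_eq _ Fintype.one_lt_card]; rfl)
  rwa [roots_X_pow_card_sub_X] at h

theorem prod_sub_eq_pow_card_sub {K : Type*} [CommRing K] (ψ : Fq →+* K) (y : K) :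
    ∏ c : Fq, (y - ψ c) = y ^ Fintype.card Fq - y := by
  simpa [Polynomial.eval₂_finsetProd] using
    congrArg (Polynomial.eval₂ ψ y) prod_X_sub_C_eq_X_pow_card_sub_X

theorem prod_add_mul_eq_pow_card_sub {K : Type*} [Field K] (ψ : Fq →+* K) (x y : K) :
    ∏ c : Fq, (y + ψ c * x) = y ^ Fintype.card Fq - x ^ (Fintype.card Fq - 1) * y := by
  obtain ⟨m, hm⟩ : ∃ m, Fintype.card Fq = m + 2 := Nat.exists_eq_add_of_le' Fintype.one_lt_card
  rcases eq_or_ne x 0 with rfl | hx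
  · simp [hm]
  calc ∏ c : Fq, (y + ψ c * x) = ∏ c : Fq, x * (y / x - ψ (-c)) :=
        Finset.prod_congr rfl fun c _ => by
          rw [map_neg, sub_neg_eq_add, mul_add, mul_div_cancel₀ y hx, mul_comm x]
    _ = x ^ Fintype.card Fq * ((y / x) ^ Fintype.card Fq - y / x) := by
        rw [Finset.prod_mul_distrib, Finset.prod_const, Finset.card_univ,
          ← prod_sub_eq_pow_card_sub ψ]
        exact congrArg _ (Fintype.prod_equiv (Equiv.neg Fq) _ _ fun c => by simp)
    _ = y ^ (m + 2) - x ^ (m + 1) * y := by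
        rw [hm, mul_sub, ← mul_pow, mul_div_cancel₀ y hx, pow_succ x (m + 1), mul_assoc,
          mul_div_cancel₀ y hx]
    _ = _ := by rw [hm]; rfl

end FiniteField

namespace IntermediateField

variable {L K : Type*} [Field L] [Field K] [Algebra L K] {a : K}

theorem finrank_eq_natDegree_minpoly_of_adjoin_simple_eq_top (ha : IsIntegral L a)
    (hadj : L⟮a⟯ = ⊤) : Module.finrank L K = (minpoly L a).natDegree := by
  rw [← adjoin.finrank ha, hadj, finrank_top']

theorem finiteDimensional_of_adjoin_simple_eq_top (ha : IsIntegral L a) (hadj : L⟮a⟯ = ⊤) :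
    FiniteDimensional L K :=
  Module.finite_of_finrank_pos <| by
    rw [finrank_eq_natDegree_minpoly_of_adjoin_simple_eq_top ha hadj]
    exact minpoly.natDegree_pos ha

theorem finrank_le_natDegree_of_adjoin_simple_eq_top (hadj : L⟮a⟯ = ⊤) {f : Polynomial L}
    (hf : f.Monic) (hfa : Polynomial.aeval a f = 0) : Module.finrank L K ≤ f.natDegree := by
  rw [finrank_eq_natDegree_minpoly_of_adjoin_simple_eq_top ⟨f, hf, hfa⟩ hadj]
  exact Polynomial.natDegree_le_natDegree (minpoly.min L a hf hfa)

end IntermediateField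

namespace FixedPoints

variable {G K : Type*} [Group G] [Fintype G] [Field K] [MulSemiringAction G K] [FaithfulSMul G K]
  {L : Subfield K}

theorem subfield_eq_of_le_of_finrank_le (hL : L ≤ subfield G K) [FiniteDimensional L K]
    (h : Module.finrank L K ≤ Fintype.card G) : L = subfield G K := by
  let E : IntermediateField L K := (subfield G K).toIntermediateField fun x => hL x.2
  have hE : ⊥ = E := IntermediateField.eq_of_le_of_finrank_le' bot_le <| by
    rw [IntermediateField.finrank_bot']
    exact h.trans (finrank_eq_card G K).ge
  refine le_antisymm hL fun x hx => ?_
  obtain ⟨y, rfl⟩ := IntermediateField.mem_bot.1 (hE ▸ (show x ∈ E from hx))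
  exact y.2

theorem subfield_eq_of_adjoin_simple_eq_top (hL : L ≤ subfield G K) {a : K}
    (hadj : IntermediateField.adjoin L {a} = ⊤) {f : Polynomial L} (hf : f.Monic)
    (hfa : Polynomial.aeval a f = 0) (hdeg : f.natDegree ≤ Fintype.card G) :
    L = subfield G K :=
  have := IntermediateField.finiteDimensional_of_adjoin_simple_eq_top ⟨f, hf, hfa⟩ hadj
  subfield_eq_of_le_of_finrank_le hL <|
    (IntermediateField.finrank_le_natDegree_of_adjoin_simple_eq_top hadj hf hfa).trans hdeg

end FixedPoints

theorem IsFractionRing.subfield_eq_top_of_mvPolynomial {σ R K : Type*} [CommRing R] [IsDomain R]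
    [Field K] [Algebra (MvPolynomial σ R) K] [IsFractionRing (MvPolynomial σ R) K]
    {S : Subfield K} (hC : ∀ r, algebraMap (MvPolynomial σ R) K (C r) ∈ S)
    (hX : ∀ i, algebraMap (MvPolynomial σ R) K (X i) ∈ S) :
    S = ⊤ := by
  have hpoly (p : MvPolynomial σ R) : algebraMap (MvPolynomial σ R) K p ∈ S := by
    induction p using MvPolynomial.induction_on with
    | C r => exact hC r
    | add p q hp hq => rw [map_add]; exact add_mem hp hq
    | mul_X p i hp => rw [map_mul]; exact mul_mem hp (hX i)
  refine eq_top_iff.2 fun x _ => ?_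
  obtain ⟨p, q, -, rfl⟩ := IsFractionRing.div_surjective (A := MvPolynomial σ R) x
  exact div_mem (hpoly p) (hpoly q)

namespace Polynomial

variable {R : Type*} [Ring R] {n : ℕ}

theorem monic_X_pow_sub_C_mul_X_sub_C (hn : 1 < n) (b c : R) :
    (X ^ n - C b * X - C c).Monic := by
  rw [sub_sub]
  exact monic_X_pow_sub (degree_linear_le.trans_lt (by exact_mod_cast hn))

theorem natDegree_X_pow_sub_C_mul_X_sub_C [Nontrivial R] (hn : 1 < n) (b c : R) :
    (X ^ n - C b * X - C c).natDegree = n := by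
  rw [sub_sub, natDegree_sub_eq_left_of_natDegree_lt (natDegree_linear_le.trans_lt ?_),
    natDegree_X_pow]
  rwa [natDegree_X_pow]

end Polynomial

section PAction

variable (F : Type*) [Field F]

local notation "𝕂" => FractionRing (MvPolynomial (Fin 3) F)
local notation "φ" => algebraMap (MvPolynomial (Fin 3) F) (FractionRing (MvPolynomial (Fin 3) F))

theorem σP_add (a b : F) : σP F (a + b) = (σP F a).comp (σP F b) := by
  apply MvPolynomial.algHom_ext; intro i; fin_cases i <;> simp [σP, map_ofNat] <;> ring

theorem σP_zero : σP F 0 = AlgHom.id F _ := by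
  apply MvPolynomial.algHom_ext; intro i; fin_cases i <;> simp [σP]

noncomputable def σHom : Multiplicative F →* RingAut 𝕂 :=
  (IsFractionRing.ringEquivOfRingEquivHom _ 𝕂).comp
    { toFun := fun c => (σE F c.toAdd).toRingEquiv
      map_one' := RingEquiv.ext fun p => congrArg (· p) (σP_zero F)
      map_mul' := fun a b => RingEquiv.ext fun p => congrArg (· p) (σP_add F a.toAdd b.toAdd) }

theorem σK_algebraMap (c : F) (p : MvPolynomial (Fin 3) F) :
    σK F c (φ p) = φ (σP F c p) :=
  IsFractionRing.ringEquivOfRingEquiv_algebraMap _ p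

theorem σP_C (c r : F) : σP F c (C r) = C r := by simp [σP, algebraMap_eq]

theorem σP_X0 (c : F) : σP F c (X 0) = X 0 := by simp [σP]

theorem σP_X1 (c : F) : σP F c (X 1) = X 1 + C c * X 0 := by simp [σP]

theorem σP_discr (c : F) : σP F c (X 1 ^ 2 - X 0 * X 2) = X 1 ^ 2 - X 0 * X 2 := by
  simp [σP, map_ofNat]; ring

variable (Fq : Type*) [Field Fq] [Algebra Fq F]

theorem σP_prod [Fintype Fq] (c : Fq) :
    σP F (algebraMap Fq F c) (∏ d : Fq, (X 1 + C (algebraMap Fq F d) * X 0)) =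
      ∏ d : Fq, (X 1 + C (algebraMap Fq F d) * X 0) := by
  rw [map_prod]
  refine Fintype.prod_equiv (Equiv.addLeft c) _ _ fun d => ?_
  simp [σP_X1, σP_X0, add_mul, add_assoc]

/-- `P` is modelled as the additive group of `F_q`, acting through `c ↦ σ_c`. -/
noncomputable instance : MulSemiringAction (Multiplicative Fq) 𝕂 :=
  MulSemiringAction.compHom 𝕂
    ((σHom F).comp (AddMonoidHom.toMultiplicative (algebraMap Fq F).toAddMonoidHom))

theorem smul_eq_σK (g : Multiplicative Fq) (x : 𝕂) : g • x = σK F (algebraMap Fq F g.toAdd) x :=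
  rfl

instance : FaithfulSMul (Multiplicative Fq) 𝕂 where
  eq_of_smul_eq_smul {g h} hgh := by
    have := hgh (φ (X 1))
    simp only [smul_eq_σK, σK_algebraMap, σP_X1] at this
    exact (algebraMap Fq F).injective <| C_injective _ _ <|
      mul_right_cancel₀ (X_ne_zero 0) <| add_left_cancel <| IsFractionRing.injective _ 𝕂 this

theorem mem_fixedPoints_subfield_iff {x : 𝕂} :
    x ∈ FixedPoints.subfield (Multiplicative Fq) 𝕂 ↔ ∀ c : Fq, σK F (algebraMap Fq F c) x = x :=
  ⟨fun h c => h (.ofAdd c), fun h g => h g.toAdd⟩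

theorem algebraMap_mem_fixedPoints_subfield {p : MvPolynomial (Fin 3) F}
    (hp : ∀ c : Fq, σP F (algebraMap Fq F c) p = p) :
    φ p ∈ FixedPoints.subfield (Multiplicative Fq) 𝕂 :=
  (mem_fixedPoints_subfield_iff F Fq).2 fun c => by rw [σK_algebraMap, hp]

theorem algebraMap_prod_eq [Fintype Fq] :
    φ (∏ c : Fq, (X 1 + C (algebraMap Fq F c) * X 0)) =
      φ (X 1) ^ Fintype.card Fq - φ (X 0) ^ (Fintype.card Fq - 1) * φ (X 1) := by
  rw [← FiniteField.prod_add_mul_eq_pow_card_sub ((φ).comp (C.comp (algebraMap Fq F))), map_prod]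
  simp

theorem aeval_X1_X_pow_card_sub_C_mul_X_sub_C [Fintype Fq] {L : Subfield 𝕂} (h0 : φ (X 0) ∈ L)
    (hβ : φ (∏ c : Fq, (X 1 + C (algebraMap Fq F c) * X 0)) ∈ L) :
    Polynomial.aeval (φ (X 1)) (Polynomial.X ^ Fintype.card Fq -
      Polynomial.C ((⟨φ (X 0), h0⟩ : L) ^ (Fintype.card Fq - 1)) * Polynomial.X -
      Polynomial.C (⟨_, hβ⟩ : L)) = 0 := by
  simp only [map_sub, map_mul, map_pow, Polynomial.aeval_X, Polynomial.aeval_C]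
  change φ (X 1) ^ _ - φ (X 0) ^ _ * φ (X 1) - φ _ = 0
  rw [algebraMap_prod_eq, sub_self]

theorem adjoin_X1_eq_top {L : Subfield 𝕂} (hC : ∀ r, φ (C r) ∈ L)
    (h0 : φ (X 0) ∈ L) (hΔ : φ (X 1 ^ 2 - X 0 * X 2) ∈ L) :
    IntermediateField.adjoin L {φ (X 1)} = ⊤ := by
  set E := IntermediateField.adjoin L {φ (X 1)}
  have hLE (y : 𝕂) (hy : y ∈ L) : y ∈ E := E.algebraMap_mem ⟨y, hy⟩
  have h1 : φ (X 1) ∈ E := IntermediateField.mem_adjoin_simple_self _ _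
  have h2 : φ (X 2) ∈ E := by
    have hX0 : φ (X 0) ≠ 0 :=
      (IsFractionRing.injective _ 𝕂).ne_iff' (map_zero _) |>.2 (X_ne_zero 0)
    have : φ (X 2) = (φ (X 1) ^ 2 - φ (X 1 ^ 2 - X 0 * X 2)) / φ (X 0) := by
      rw [eq_div_iff hX0, map_sub, map_pow, map_mul]; ring
    rw [this]
    exact div_mem (sub_mem (pow_mem h1 2) (hLE _ hΔ)) (hLE _ h0)
  have hE := IsFractionRing.subfield_eq_top_of_mvPolynomial (S := E.toSubfield)
    (fun r => hLE _ (hC r)) fun i => by fin_cases i <;> [exact hLE _ h0; exact h1; exact h2]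
  exact eq_top_iff.2 fun x _ => (hE ▸ Subfield.mem_top x : x ∈ E.toSubfield)

end PAction

theorem fixed_field_of_P_general (F : Type*) [Field F]
    (Fq : Type*) [Field Fq] [Fintype Fq] [Algebra Fq F]
    (Δ β : MvPolynomial (Fin 3) F)
    (hΔ : Δ = X 1 ^ 2 - X 0 * X 2)
    (hβ : β = ∏ c : Fq, (X 1 + C (algebraMap Fq F c) * X 0)) :
    {x : FractionRing (MvPolynomial (Fin 3) F) | ∀ c : Fq, σK F (algebraMap Fq F c) x = x} =
      (Subfield.closure
        (Set.range ((algebraMap (MvPolynomial (Fin 3) F)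
            (FractionRing (MvPolynomial (Fin 3) F))).comp (C : F →+* MvPolynomial (Fin 3) F)) ∪
          {algebraMap _ _ (X 0 : MvPolynomial (Fin 3) F), algebraMap _ _ β, algebraMap _ _ Δ}) :
        Set (FractionRing (MvPolynomial (Fin 3) F))) := by
  set φ := algebraMap (MvPolynomial (Fin 3) F) (FractionRing (MvPolynomial (Fin 3) F))
  set L := Subfield.closure (Set.range (φ.comp C) ∪ {φ (X 0), φ β, φ Δ})
  have hC (r : F) : φ (C r) ∈ L := Subfield.subset_closure (.inl ⟨r, rfl⟩)
  have h0 : φ (X 0) ∈ L := Subfield.subset_closure (.inr (by simp))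
  have hβL : φ (∏ c : Fq, (X 1 + C (algebraMap Fq F c) * X 0)) ∈ L :=
    hβ ▸ Subfield.subset_closure (.inr (by simp))
  have hΔL : φ (X 1 ^ 2 - X 0 * X 2) ∈ L := hΔ ▸ Subfield.subset_closure (.inr (by simp))
  have hL : L ≤ FixedPoints.subfield (Multiplicative Fq) _ := by
    refine Subfield.closure_le.2 fun x hx => ?_
    rcases hx with ⟨r, rfl⟩ | rfl | rfl | rfl
    all_goals refine algebraMap_mem_fixedPoints_subfield F Fq fun c => ?_
    · exact σP_C F _ r
    · exact σP_X0 F _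
    · exact hβ ▸ σP_prod F Fq c
    · exact hΔ ▸ σP_discr F _
  have hq : 1 < Fintype.card Fq := Fintype.one_lt_card
  have hL_eq := FixedPoints.subfield_eq_of_adjoin_simple_eq_top hL
    (adjoin_X1_eq_top F hC h0 hΔL) (Polynomial.monic_X_pow_sub_C_mul_X_sub_C hq _ _)
    (aeval_X1_X_pow_card_sub_C_mul_X_sub_C F Fq h0 hβL)
    (by rw [Polynomial.natDegree_X_pow_sub_C_mul_X_sub_C hq, Fintype.card_multiplicative])
  ext x
  rw [SetLike.mem_coe, hL_eq, mem_fixedPoints_subfield_iff]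
  rfl

/-- `F(a0,a1,a2)^P = F(a0, β, Δ)`: the fixed field of `P` acting on the field of fractions of
`F[a0,a1,a2]` is the subfield generated by the constants `F` together with `a0`, `β` and `Δ`. -/
theorem fixed_field_of_P (F : Type*) [Field F] (p n q : ℕ) (hp : p.Prime) (hp2 : p ≠ 2)
    [CharP F p] (hn : n ≠ 0) (hq : q = p ^ n)
    (Fq : Type*) [Field Fq] [Fintype Fq] [Algebra Fq F] (hcard : Fintype.card Fq = q)
    (Δ β : MvPolynomial (Fin 3) F)
    (hΔ : Δ = X 1 ^ 2 - X 0 * X 2)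
    (hβ : β = ∏ c : Fq, (X 1 + C (algebraMap Fq F c) * X 0)) :
    {x : FractionRing (MvPolynomial (Fin 3) F) | ∀ c : Fq, σK F (algebraMap Fq F c) x = x} =
      (Subfield.closure
        (Set.range ((algebraMap (MvPolynomial (Fin 3) F)
            (FractionRing (MvPolynomial (Fin 3) F))).comp (C : F →+* MvPolynomial (Fin 3) F)) ∪
          {algebraMap _ _ (X 0 : MvPolynomial (Fin 3) F), algebraMap _ _ β, algebraMap _ _ Δ}) :
        Set (FractionRing (MvPolynomial (Fin 3) F))) :=
  fixed_field_of_P_general F Fq Δ β hΔ hβ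
end

section
/- The polynomial B = β·∏_{k∈Q} γ_k is SL_2(F_q)-invariant: σ_c(B) = B for all c ∈ F_q and τ(B) = B. -/
open MvPolynomial
open scoped Classical

/-!
Read the linear form `u a2 + v a1 + w a0` as the binary quadratic form `u x² + v xy + w y²`;
then `σ_c` is the substitution `x ↦ x + c y` and `τ` is `(x, y) ↦ (y, -x)`, so both preserve the
discriminant `v² - 4uw`.  The factors of `B` are exactly the forms whose discriminant is a nonzero
square, normalised to `u = 1` or to `u = 0, v = 1`.  Hence `σ_c` and `τ` permute the factors up to
scalars: `σ_c` translates the parameter `c` of each factor, and `τ` acts as an involution on them,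
so `τ B = μ B` for some `μ ∈ F_q`.  Instead of computing `μ`, use that `τ² = 1` and `(τ σ_1)³ = 1`
as substitutions and `B ≠ 0`: then `μ² = μ³ = 1`, so `μ = 1`.
-/

theorem τA_mul_self (F : Type*) [Field F] : τA F * τA F = 1 := by
  apply MvPolynomial.algHom_ext
  intro i
  fin_cases i <;> simp [τA]

theorem τA_mul_σP_one_pow_three (F : Type*) [Field F] : (τA F * σP F 1) ^ 3 = 1 := by
  apply MvPolynomial.algHom_ext
  intro i
  fin_cases i <;> simp [τA, σP, pow_succ, map_ofNat] <;> ring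

theorem AlgHom.apply_eq_self_of_apply_eq_smul {R A : Type*} [Field R] [Ring A] [Algebra R A]
    {τ σ : A →ₐ[R] A} (hτ : τ * τ = 1) (hτσ : (τ * σ) ^ 3 = 1) {b : A} (hb : b ≠ 0)
    (hσb : σ b = b) {μ : R} (hτb : τ b = μ • b) : τ b = b := by
  have hpow : ∀ n : ℕ, ((τ * σ) ^ n) b = μ ^ n • b := by
    intro n
    induction n with
    | zero => simp
    | succ n ih => rw [pow_succ, AlgHom.mul_apply, AlgHom.mul_apply, hσb, hτb, map_smul, ih,
        smul_smul, pow_succ']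
  have hμ2 : μ ^ 2 = 1 := smul_left_injective R hb <| by
    simpa [hτb, pow_two, smul_smul] using congrArg (· b) hτ
  have hμ3 : μ ^ 3 = 1 := smul_left_injective R hb <| by simpa [hτσ] using (hpow 3).symm
  have hμ : μ = 1 := by linear_combination hμ3 - μ * hμ2
  rw [hτb, hμ, one_smul]

section LinForm

variable {F K : Type*} [Field F] [Field K] [Algebra K F]

variable (F) in
noncomputable def linForm (t : Fin 3 → K) : MvPolynomial (Fin 3) F :=
  ∑ i, C (algebraMap K F (t i)) * X i

theorem τA_linForm (t : Fin 3 → K) : τA F (linForm F t) = linForm F ![t 2, -t 1, t 0] := by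
  simp [linForm, τA, Fin.sum_univ_three]
  ring

theorem σP_linForm (d : K) (t : Fin 3 → K) : σP F (algebraMap K F d) (linForm F t) =
    linForm F ![t 0 + d * t 1 + d ^ 2 * t 2, t 1 + 2 * d * t 2, t 2] := by
  simp [linForm, σP, Fin.sum_univ_three, map_ofNat]
  ring

theorem linForm_smul (a : K) (t : Fin 3 → K) :
    linForm F (a • t) = C (algebraMap K F a) * linForm F t := by
  simp [linForm, Finset.mul_sum, mul_assoc]

theorem linForm_ne_zero {t : Fin 3 → K} (ht : t ≠ 0) : linForm F t ≠ 0 := by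
  obtain ⟨j, hj⟩ := Function.ne_iff.1 ht
  intro h
  have := congrArg (eval (Pi.single j 1)) h
  simp [linForm, Pi.single_apply] at this
  exact hj this

end LinForm

section Index

variable {K : Type*} [Field K]

/-- The coefficients, of `a0, a1, a2` in this order, of the factor `a1 + c a0` of `β` and of the
factor `a2 + 2c a1 + (c² - k) a0` of `γ_k`. -/
def factorCoeffs : K ⊕ K × K → Fin 3 → K
  | .inl c => ![c, 1, 0]
  | .inr (k, c) => ![c ^ 2 - k, 2 * c, 1]

def shiftIndex (d : K) : K ⊕ K × K ≃ K ⊕ K × K :=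
  Equiv.sumCongr (Equiv.addRight d) ((Equiv.refl K).prodCongr (Equiv.addRight d))

noncomputable def tauIndex : K ⊕ K × K → K ⊕ K × K
  | .inl c => if c = 0 then .inl 0 else .inr ((2 * c)⁻¹ ^ 2, -(2 * c)⁻¹)
  | .inr (k, c) =>
    if c ^ 2 = k then .inl (-(2 * c)⁻¹) else .inr (k / (c ^ 2 - k) ^ 2, -c / (c ^ 2 - k))

noncomputable def tauScale : K ⊕ K × K → K
  | .inl c => if c = 0 then -1 else c
  | .inr (k, c) => if c ^ 2 = k then -2 * c else c ^ 2 - k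

theorem factorCoeffs_ne_zero (i : K ⊕ K × K) : factorCoeffs i ≠ 0 := by
  intro h
  rcases i with c | ⟨k, c⟩
  · simpa [factorCoeffs] using congrFun h 1
  · simpa [factorCoeffs] using congrFun h 2

theorem factorCoeffs_shiftIndex (d : K) (i : K ⊕ K × K) :
    factorCoeffs (shiftIndex d i) =
      ![factorCoeffs i 0 + d * factorCoeffs i 1 + d ^ 2 * factorCoeffs i 2,
        factorCoeffs i 1 + 2 * d * factorCoeffs i 2, factorCoeffs i 2] := by
  rcases i with c | ⟨k, c⟩ <;> ext j <;> fin_cases j <;> simp [shiftIndex, factorCoeffs] <;> ring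

variable [Fintype K]

variable (K) in
noncomputable def factorIndex : Finset (K ⊕ K × K) :=
  Finset.univ.disjSum ((Finset.univ.filter fun k : K => k ≠ 0 ∧ IsSquare k) ×ˢ Finset.univ)

@[simp] theorem inl_mem_factorIndex (c : K) : .inl c ∈ factorIndex K := by
  simp [factorIndex]

@[simp] theorem inr_mem_factorIndex (k c : K) :
    .inr (k, c) ∈ factorIndex K ↔ k ≠ 0 ∧ IsSquare k := by
  simp [factorIndex]

theorem shiftIndex_mem_factorIndex (d : K) (i : K ⊕ K × K) :
    shiftIndex d i ∈ factorIndex K ↔ i ∈ factorIndex K := by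
  rcases i with c | ⟨k, c⟩ <;> simp [shiftIndex]

variable (h2 : (2 : K) ≠ 0)
include h2

theorem tauIndex_mem_factorIndex {i : K ⊕ K × K} (hi : i ∈ factorIndex K) :
    tauIndex i ∈ factorIndex K := by
  rcases i with c | ⟨k, c⟩
  · by_cases hc : c = 0
    · simp [tauIndex, hc]
    · simp [tauIndex, hc, h2, IsSquare.sq]
  · by_cases hck : c ^ 2 = k
    · simp [tauIndex, hck]
    · obtain ⟨hk, r, rfl⟩ := (inr_mem_factorIndex k c).1 hi
      have hd : c ^ 2 - r * r ≠ 0 := sub_ne_zero.2 hck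
      simp only [tauIndex, hck, if_false, inr_mem_factorIndex]
      exact ⟨by simpa [hd] using hk, r / (c ^ 2 - r * r), by field_simp⟩

theorem tauIndex_tauIndex {i : K ⊕ K × K} (hi : i ∈ factorIndex K) :
    tauIndex (tauIndex i) = i := by
  rcases i with c | ⟨k, c⟩
  · by_cases hc : c = 0
    · simp [tauIndex, hc]
    · simp [tauIndex, hc]
      field_simp
  · have hk := ((inr_mem_factorIndex k c).1 hi).1
    by_cases hck : c ^ 2 = k
    · subst hck
      have hc : c ≠ 0 := by rintro rfl; simp at hk
      simp [tauIndex, hc, h2, mul_comm 2 c]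
    · have hd : c ^ 2 - k ≠ 0 := sub_ne_zero.2 hck
      have hd2 : (-c / (c ^ 2 - k)) ^ 2 - k / (c ^ 2 - k) ^ 2 = (c ^ 2 - k)⁻¹ := by field_simp
      have hne : (-c / (c ^ 2 - k)) ^ 2 ≠ k / (c ^ 2 - k) ^ 2 := by
        rw [← sub_ne_zero, hd2]; exact inv_ne_zero hd
      simp only [tauIndex, hck, hne, if_false, hd2, Sum.inr.injEq, Prod.mk.injEq]
      constructor <;> field_simp

theorem factorCoeffs_tauIndex {i : K ⊕ K × K} (hi : i ∈ factorIndex K) :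
    ![factorCoeffs i 2, -factorCoeffs i 1, factorCoeffs i 0] =
      tauScale i • factorCoeffs (tauIndex i) := by
  rcases i with c | ⟨k, c⟩
  · by_cases hc : c = 0
    · ext j; fin_cases j <;> simp [tauIndex, tauScale, factorCoeffs, hc]
    · ext j; fin_cases j <;> simp [tauIndex, tauScale, factorCoeffs, hc]
      field_simp
  · have hk := ((inr_mem_factorIndex k c).1 hi).1
    by_cases hck : c ^ 2 = k
    · subst hck
      have hc : c ≠ 0 := by rintro rfl; simp at hk
      ext j; fin_cases j <;> simp [tauIndex, tauScale, factorCoeffs]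
      field_simp
    · have hd : c ^ 2 - k ≠ 0 := sub_ne_zero.2 hck
      ext j; fin_cases j <;> simp [tauIndex, tauScale, factorCoeffs, hck] <;> field_simp

end Index

section FactorProduct

variable (F K : Type*) [Field F] [Field K] [Fintype K] [Algebra K F]

noncomputable def factorProduct : MvPolynomial (Fin 3) F :=
  ∏ i ∈ factorIndex K, linForm F (factorCoeffs i)

theorem factorProduct_ne_zero : factorProduct F K ≠ 0 :=
  Finset.prod_ne_zero_iff.2 fun i _ => linForm_ne_zero (factorCoeffs_ne_zero i)

theorem prod_mul_prod_eq_factorProduct :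
    (∏ c : K, (X 1 + C (algebraMap K F c) * X 0)) *
      ∏ k ∈ Finset.univ.filter (fun k : K => k ≠ 0 ∧ IsSquare k),
        ∏ c : K, (X 2 + C (2 * algebraMap K F c) * X 1 +
          C ((algebraMap K F c) ^ 2 - algebraMap K F k) * X 0) = factorProduct F K := by
  rw [factorProduct, factorIndex, Finset.prod_disjSum, Finset.prod_product]
  simp only [linForm, factorCoeffs, Fin.sum_univ_three]
  congr 1 <;> refine Finset.prod_congr rfl fun _ _ => ?_
  · simp
    ring
  · refine Finset.prod_congr rfl fun _ _ => ?_
    simp [map_ofNat]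
    ring

theorem σP_factorProduct (d : K) :
    σP F (algebraMap K F d) (factorProduct F K) = factorProduct F K := by
  rw [factorProduct, map_prod]
  refine Finset.prod_equiv (shiftIndex d) (fun i => (shiftIndex_mem_factorIndex d i).symm)
    fun i _ => ?_
  rw [σP_linForm, factorCoeffs_shiftIndex]

variable {K} in
theorem τA_factorProduct (h2 : (2 : K) ≠ 0) : τA F (factorProduct F K) =
    C (algebraMap K F (∏ i ∈ factorIndex K, tauScale i)) * factorProduct F K := by
  rw [factorProduct, map_prod, Finset.prod_congr rfl fun i hi => by
      rw [τA_linForm, factorCoeffs_tauIndex h2 hi, linForm_smul],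
    Finset.prod_mul_distrib, ← map_prod, ← map_prod]
  congr 1
  exact Finset.prod_nbij' tauIndex tauIndex (fun i hi => tauIndex_mem_factorIndex h2 hi)
    (fun i hi => tauIndex_mem_factorIndex h2 hi) (fun i hi => tauIndex_tauIndex h2 hi)
    (fun i hi => tauIndex_tauIndex h2 hi) fun _ _ => rfl

end FactorProduct

theorem B_invariant_general (F : Type*) [Field F] (p : ℕ) (hp2 : p ≠ 2)
    [CharP F p]
    (Fq : Type*) [Field Fq] [Fintype Fq] [Algebra Fq F]
    (β B : MvPolynomial (Fin 3) F)
    (hβ : β = ∏ c : Fq, (X 1 + C (algebraMap Fq F c) * X 0))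
    (hB : B = β * ∏ k ∈ Finset.univ.filter (fun k : Fq => k ≠ 0 ∧ IsSquare k),
      ∏ c : Fq, (X 2 + C (2 * algebraMap Fq F c) * X 1 +
        C ((algebraMap Fq F c) ^ 2 - algebraMap Fq F k) * X 0)) :
    (∀ c : Fq, σP F (algebraMap Fq F c) B = B) ∧ τA F B = B := by
  have h2 : (2 : Fq) ≠ 0 := fun h => Ring.two_ne_zero (R := F) (by rwa [ringChar.eq F p])
    (by rw [← map_ofNat (algebraMap Fq F) 2, h, map_zero])
  rw [hβ, prod_mul_prod_eq_factorProduct] at hB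
  subst hB
  refine ⟨σP_factorProduct F Fq, ?_⟩
  refine AlgHom.apply_eq_self_of_apply_eq_smul (τA_mul_self F) (τA_mul_σP_one_pow_three F)
    (factorProduct_ne_zero F Fq) (by simpa using σP_factorProduct F Fq 1)
    ((τA_factorProduct F h2).trans C_mul')

/-- `B = β·∏_{k ∈ Q} γ_k` (product over the nonzero quadratic residues of `F_q`) is
`SL₂(F_q)`-invariant: it is fixed by every `σ_c` and by `τ`. -/
theorem B_invariant (F : Type*) [Field F] (p n q : ℕ) (hp : p.Prime) (hp2 : p ≠ 2)
    [CharP F p] (hn : n ≠ 0) (hq : q = p ^ n)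
    (Fq : Type*) [Field Fq] [Fintype Fq] [Algebra Fq F] (hcard : Fintype.card Fq = q)
    (β B : MvPolynomial (Fin 3) F)
    (hβ : β = ∏ c : Fq, (X 1 + C (algebraMap Fq F c) * X 0))
    (hB : B = β * ∏ k ∈ Finset.univ.filter (fun k : Fq => k ≠ 0 ∧ IsSquare k),
      ∏ c : Fq, (X 2 + C (2 * algebraMap Fq F c) * X 1 +
        C ((algebraMap Fq F c) ^ 2 - algebraMap Fq F k) * X 0)) :
    (∀ c : Fq, σP F (algebraMap Fq F c) B = B) ∧ τA F B = B :=
  B_invariant_general F p hp2 Fq β B hβ hB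
end
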